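/- The operators S₁ = -4i(I₁ₓI₂zI₃ᵧ + I₁ᵧI₂zI₃ₓ), S₂ = -2i(I₁ₓI₂ₓ + I₂ₓI₃ₓ), S₃ = -2i(I₁ᵧI₂ᵧ + I₂ᵧI₃ᵧ) on (ℂ²)⊗³ satisfy the so(3) relations [S₁,S₂] = S₃, [S₂,S₃] = S₁, [S₃,S₁] = S₂. -/

import Mathlib

/-!
By the mixed-product property `(A ⊗ B) * (C ⊗ D) = (A * C) ⊗ (B * D)`, every product of two
of the operators `Sᵢ` is a sum of Kronecker products of single-site products of spin matrices,
which the spin-1/2 multiplication table `I_a I_b = δ_ab / 4 + (i / 2) ε_abc I_c` evaluates.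
Both sides of each relation are then combinations of the same Kronecker monomials, and their
coefficients agree.
-/

open Matrix Kronecker

noncomputable section

def Ix : Matrix (Fin 2) (Fin 2) ℂ := (1 / 2 : ℂ) • !![0, 1; 1, 0]
def Iy : Matrix (Fin 2) (Fin 2) ℂ := (1 / 2 : ℂ) • !![0, -Complex.I; Complex.I, 0]
def Iz : Matrix (Fin 2) (Fin 2) ℂ := (1 / 2 : ℂ) • !![1, 0; 0, -1]
def Id2 : Matrix (Fin 2) (Fin 2) ℂ := 1

def S1 : Matrix ((Fin 2 × Fin 2) × Fin 2) ((Fin 2 × Fin 2) × Fin 2) ℂ :=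
  (-4 * Complex.I) • ((Ix ⊗ₖ Iz) ⊗ₖ Iy + (Iy ⊗ₖ Iz) ⊗ₖ Ix)
def S2 : Matrix ((Fin 2 × Fin 2) × Fin 2) ((Fin 2 × Fin 2) × Fin 2) ℂ :=
  (-2 * Complex.I) • ((Ix ⊗ₖ Ix) ⊗ₖ Id2 + (Id2 ⊗ₖ Ix) ⊗ₖ Ix)
def S3 : Matrix ((Fin 2 × Fin 2) × Fin 2) ((Fin 2 × Fin 2) × Fin 2) ℂ :=
  (-2 * Complex.I) • ((Iy ⊗ₖ Iy) ⊗ₖ Id2 + (Id2 ⊗ₖ Iy) ⊗ₖ Iy)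

lemma Ix_mul_Ix : Ix * Ix = (1 / 4 : ℂ) • 1 := by
  ext i j
  fin_cases i <;> fin_cases j <;> simp [Ix, mul_apply, Fin.sum_univ_two] <;> ring

lemma Iy_mul_Iy : Iy * Iy = (1 / 4 : ℂ) • 1 := by
  ext i j
  fin_cases i <;> fin_cases j <;> simp [Iy, mul_apply, Fin.sum_univ_two] <;> ring_nf <;> norm_num

lemma Ix_mul_Iy : Ix * Iy = (Complex.I / 2) • Iz := by
  ext i j
  fin_cases i <;> fin_cases j <;> simp [Ix, Iy, Iz, mul_apply, Fin.sum_univ_two] <;> ring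

lemma Iy_mul_Ix : Iy * Ix = -(Complex.I / 2) • Iz := by
  ext i j
  fin_cases i <;> fin_cases j <;> simp [Ix, Iy, Iz, mul_apply, Fin.sum_univ_two] <;> ring

lemma Iy_mul_Iz : Iy * Iz = (Complex.I / 2) • Ix := by
  ext i j
  fin_cases i <;> fin_cases j <;> simp [Ix, Iy, Iz, mul_apply, Fin.sum_univ_two] <;> ring

lemma Iz_mul_Iy : Iz * Iy = -(Complex.I / 2) • Ix := by
  ext i j
  fin_cases i <;> fin_cases j <;> simp [Ix, Iy, Iz, mul_apply, Fin.sum_univ_two] <;> ring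

lemma Iz_mul_Ix : Iz * Ix = (Complex.I / 2) • Iy := by
  ext i j
  fin_cases i <;> fin_cases j <;> simp [Ix, Iy, Iz, mul_apply, Fin.sum_univ_two] <;> ring_nf
    <;> norm_num

lemma Ix_mul_Iz : Ix * Iz = -(Complex.I / 2) • Iy := by
  ext i j
  fin_cases i <;> fin_cases j <;> simp [Ix, Iy, Iz, mul_apply, Fin.sum_univ_two] <;> ring_nf
    <;> norm_num

theorem stmt_14 :
    S1 * S2 - S2 * S1 = S3 ∧ S2 * S3 - S3 * S2 = S1 ∧ S3 * S1 - S1 * S3 = S2 := by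
  refine ⟨?_, ?_, ?_⟩ <;>
  · simp only [S1, S2, S3, Id2, smul_mul_assoc, mul_smul_comm, add_mul, mul_add,
      ← mul_kronecker_mul, one_mul, mul_one, Ix_mul_Ix, Iy_mul_Iy, Ix_mul_Iy, Iy_mul_Ix,
      Iy_mul_Iz, Iz_mul_Iy, Iz_mul_Ix, Ix_mul_Iz, smul_kronecker, kronecker_smul, smul_smul,
      smul_add]
    match_scalars <;> norm_num [Complex.ext_iff]
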